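/- arXiv:1104.4563 — 2 statements merged into one kernel-verified Lean document; each statement's English description precedes it below -/
import Mathlib

section
/- Fix A ∈ ℝ and assume: (C1) g is C² on an open neighborhood of A; (C2) ∫_{(1,∞)} Π(du) · max_{A−u ≤ ζ ≤ A} |g(ζ) − g(A)| < ∞. Then lim_{x↓A} ∫_{(0,∞)} Π(du) ∫_0^{min(u, x−A)} W'(x−z−A)(g(z+A−u) − g(A)) dz = 0; that is, φ_{g,A}'(A+) = 0. -/
/-!
For `0 < x - A ≤ 1` the inner integral runs over an interval of length `min u (x - A)` on
which `0 ≤ W' ≤ D := e^Φ (L + Φ C)` (because `(e^{-Φy} W)' = e^{-Φy} (W' - Φ W)`), and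
`|g (z + A - u) - g A|` is at most the oscillation `S u` of `g` on `[A - u, A]`. Hence it is
bounded by `D · S u · min u (x - A)`, which tends to `0` for each `u` and is dominated by
`D · S u · min u 1`. The latter is `ν`-integrable: `S u = O(u)` near `0` since `g` is `C¹` at `A`,
so small jumps are controlled by `∫ min 1 u² dν < ∞`, and large ones by (C2).
-/

open MeasureTheory Real Set Filter

open scoped Topology NNReal

theorem measurable_intervalIntegral_of_measurable_uncurry {F : ℝ → ℝ → ℝ}
    (hF : Measurable (Function.uncurry F)) {a b : ℝ → ℝ} (ha : Measurable a)
    (hb : Measurable b) : Measurable fun u => ∫ z in a u..b u, F u z := by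
  have hIoc : ∀ {a b : ℝ → ℝ}, Measurable a → Measurable b →
      Measurable fun u => ∫ z in Ioc (a u) (b u), F u z := by
    intro a b ha hb
    have hs : MeasurableSet {q : ℝ × ℝ | q.2 ∈ Ioc (a q.1) (b q.1)} :=
      (measurableSet_lt (ha.comp measurable_fst) measurable_snd).inter
        (measurableSet_le measurable_snd (hb.comp measurable_fst))
    convert ((hF.indicator hs).stronglyMeasurable.integral_prod_right' (ν := volume)).measurable
      using 2 with u
    exact (integral_indicator measurableSet_Ioc).symm
  exact (hIoc ha hb).sub (hIoc hb ha)

lemma deriv_nonneg_of_monotoneOn_Ici {W : ℝ → ℝ} (hWm : MonotoneOn W (Ici 0)) {y : ℝ}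
    (hy : 0 < y) : 0 ≤ deriv W y := by
  rw [← derivWithin_of_mem_nhds (Ici_mem_nhds hy)]
  exact hWm.derivWithin_nonneg

section ExpWeighted

variable {W : ℝ → ℝ} {Φ C L : ℝ}

lemma exp_neg_mul_deriv_le {y : ℝ} (hΦ : 0 ≤ Φ) (hWd : DifferentiableAt ℝ W y)
    (hWΦb : exp (-Φ * y) * W y ≤ C) (hL : deriv (fun t => exp (-Φ * t) * W t) y ≤ L) :
    exp (-Φ * y) * deriv W y ≤ L + Φ * C := by
  have hexp : HasDerivAt (fun t => exp (-Φ * t)) (exp (-Φ * y) * (-Φ)) y := by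
    simpa [mul_comm] using ((hasDerivAt_id y).const_mul (-Φ)).exp
  rw [(hexp.fun_mul hWd.hasDerivAt).deriv] at hL
  nlinarith

lemma abs_deriv_le_of_exp_neg_mul_bounds (hΦ : 0 ≤ Φ) (hWm : MonotoneOn W (Ici 0))
    (hWd : ∀ y ∈ Ioi (0:ℝ), DifferentiableAt ℝ W y)
    (hWΦb : ∀ y ∈ Ici (0:ℝ), exp (-Φ * y) * W y ≤ C)
    (hL : ∀ y ∈ Ioi (0:ℝ), deriv (fun t => exp (-Φ * t) * W t) y ≤ L) :
    ∀ y ∈ Ioc (0:ℝ) 1, |deriv W y| ≤ exp Φ * (L + Φ * C) := by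
  rintro y ⟨hy0, hy1⟩
  have hnonneg := deriv_nonneg_of_monotoneOn_Ici hWm hy0
  have hweighted := exp_neg_mul_deriv_le hΦ (hWd y hy0) (hWΦb y hy0.le) (hL y hy0)
  have hLC : 0 ≤ L + Φ * C := (mul_nonneg (exp_pos _).le hnonneg).trans hweighted
  rw [abs_of_nonneg hnonneg]
  calc deriv W y = exp (Φ * y) * (exp (-Φ * y) * deriv W y) := by
        rw [← mul_assoc, ← exp_add]; ring_nf; simp
    _ ≤ exp (Φ * y) * (L + Φ * C) := by gcongr
    _ ≤ exp Φ * (L + Φ * C) := by gcongr; nlinarith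

end ExpWeighted

lemma exists_abs_sub_le_mul_abs_sub {g : ℝ → ℝ} {A M : ℝ} {K : ℝ≥0} {s t : Set ℝ}
    (ht : t ∈ 𝓝 A) (hLip : LipschitzOnWith K g t) (hM : ∀ ζ ∈ s, |g ζ - g A| ≤ M) :
    ∃ B, 0 ≤ B ∧ ∀ ζ ∈ s, |g ζ - g A| ≤ B * |ζ - A| := by
  obtain ⟨ε, hε, hball⟩ := Metric.mem_nhds_iff.mp ht
  refine ⟨max (K : ℝ) (M / ε), K.2.trans (le_max_left _ _), fun ζ hζ => ?_⟩
  by_cases hnear : |ζ - A| < ε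
  · have hζt : ζ ∈ t := hball (by simpa [Real.dist_eq] using hnear)
    calc |g ζ - g A| ≤ K * |ζ - A| := by
          simpa [Real.dist_eq] using hLip.dist_le_mul ζ hζt A (mem_of_mem_nhds ht)
      _ ≤ max (K : ℝ) (M / ε) * |ζ - A| := by gcongr; exact le_max_left _ _
  · have hM0 : 0 ≤ M := (abs_nonneg _).trans (hM ζ hζ)
    calc |g ζ - g A| ≤ M := hM ζ hζ
      _ = M / ε * ε := by field_simp
      _ ≤ max (K : ℝ) (M / ε) * |ζ - A| := by
          gcongr
          · exact le_max_right _ _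
          · exact not_lt.mp hnear

noncomputable def leftOscillation (g : ℝ → ℝ) (A u : ℝ) : ℝ :=
  sSup ((fun ζ => |g ζ - g A|) '' Icc (A - u) A)

lemma leftOscillation_nonneg {g : ℝ → ℝ} {A : ℝ} (u : ℝ) : 0 ≤ leftOscillation g A u :=
  Real.sSup_nonneg (by rintro _ ⟨ζ, -, rfl⟩; exact abs_nonneg _)

lemma abs_sub_le_leftOscillation {g : ℝ → ℝ} {A u : ℝ}
    (hgb : ∀ K : Set ℝ, IsCompact K → ∃ M : ℝ, ∀ y ∈ K, |g y| ≤ M) :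
    ∀ ζ ∈ Icc (A - u) A, |g ζ - g A| ≤ leftOscillation g A u := by
  intro ζ hζ
  obtain ⟨M, hM⟩ := hgb (Icc (A - u) A) isCompact_Icc
  refine le_csSup ⟨M + |g A|, ?_⟩ (mem_image_of_mem _ hζ)
  rintro _ ⟨η, hη, rfl⟩
  exact (abs_sub _ _).trans (by linarith [hM η hη])

lemma leftOscillation_monotone {g : ℝ → ℝ} {A : ℝ}
    (hgb : ∀ K : Set ℝ, IsCompact K → ∃ M : ℝ, ∀ y ∈ K, |g y| ≤ M) :
    Monotone (leftOscillation g A) := fun u v huv =>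
  Real.sSup_le (by
    rintro _ ⟨ζ, hζ, rfl⟩
    exact abs_sub_le_leftOscillation hgb ζ ⟨by linarith [hζ.1], hζ.2⟩)
    (leftOscillation_nonneg v)

lemma exists_leftOscillation_le_mul {g : ℝ → ℝ} {A : ℝ} (hg : ContDiffAt ℝ 1 g A)
    (hgb : ∀ K : Set ℝ, IsCompact K → ∃ M : ℝ, ∀ y ∈ K, |g y| ≤ M) :
    ∃ B, 0 ≤ B ∧ ∀ u ∈ Icc (0:ℝ) 1, leftOscillation g A u ≤ B * u := by
  obtain ⟨K, t, ht, hLip⟩ := hg.exists_lipschitzOnWith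
  obtain ⟨B, hB0, hB⟩ := exists_abs_sub_le_mul_abs_sub ht hLip
    (abs_sub_le_leftOscillation (u := 1) hgb)
  refine ⟨B, hB0, fun u ⟨hu0, hu1⟩ => Real.sSup_le ?_ (by positivity)⟩
  rintro _ ⟨ζ, hζ, rfl⟩
  calc |g ζ - g A| ≤ B * |ζ - A| := hB ζ ⟨by linarith [hζ.1], hζ.2⟩
    _ ≤ B * u := by
        gcongr
        rw [abs_of_nonpos (by linarith [hζ.2])]
        linarith [hζ.1]

lemma integrableOn_of_lintegral_ofReal_lt_top {ν : Measure ℝ} {s : Set ℝ} {f : ℝ → ℝ}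
    (hs : MeasurableSet s) (hf : Measurable f) (hf0 : ∀ u ∈ s, 0 ≤ f u)
    (hfin : ∫⁻ u in s, ENNReal.ofReal (f u) ∂ν < ⊤) : IntegrableOn f s ν :=
  (lintegral_ofReal_ne_top_iff_integrable hf.aestronglyMeasurable
    ((ae_restrict_iff' hs).mpr (Eventually.of_forall hf0))).mp hfin.ne

lemma integrableOn_leftOscillation_mul_min {ν : Measure ℝ} {g : ℝ → ℝ} {A : ℝ}
    (hν : ∫⁻ z in Ioi (0:ℝ), ENNReal.ofReal (min 1 (z ^ 2)) ∂ν < ⊤)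
    (hg : ContDiffAt ℝ 1 g A)
    (hgb : ∀ K : Set ℝ, IsCompact K → ∃ M : ℝ, ∀ y ∈ K, |g y| ≤ M)
    (hC2 : ∫⁻ u in Ioi (1:ℝ), ENNReal.ofReal (leftOscillation g A u) ∂ν < ⊤) :
    IntegrableOn (fun u => leftOscillation g A u * min u 1) (Ioi 0) ν := by
  obtain ⟨B, hB0, hB⟩ := exists_leftOscillation_le_mul hg hgb
  have hSm : Measurable (leftOscillation g A) := (leftOscillation_monotone hgb).measurable
  have hsmall : IntegrableOn (fun u : ℝ => min 1 (u ^ 2)) (Ioi 0) ν :=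
    integrableOn_of_lintegral_ofReal_lt_top measurableSet_Ioi (by fun_prop)
      (fun _ _ => by positivity) hν
  have hlarge : IntegrableOn (leftOscillation g A) (Ioi 1) ν :=
    integrableOn_of_lintegral_ofReal_lt_top measurableSet_Ioi hSm
      (fun u _ => leftOscillation_nonneg u) hC2
  refine Integrable.mono' ((hsmall.const_mul B).add
      ((integrable_indicator_iff measurableSet_Ioi).mpr hlarge).integrableOn)
    (by fun_prop) ((ae_restrict_iff' measurableSet_Ioi).mpr (Eventually.of_forall fun u hu => ?_))
  have hu0 : 0 < u := hu
  have hS0 := leftOscillation_nonneg (g := g) (A := A) u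
  rw [Real.norm_eq_abs, abs_of_nonneg (mul_nonneg hS0 (le_min hu0.le zero_le_one))]
  simp only [Pi.add_apply]
  by_cases hu1 : u ≤ 1
  · rw [min_eq_left hu1, min_eq_right (by nlinarith), indicator_of_notMem (by simpa using hu1),
      add_zero]
    calc leftOscillation g A u * u ≤ B * u * u := by gcongr; exact hB u ⟨hu0.le, hu1⟩
      _ = B * u ^ 2 := by ring
  · rw [min_eq_right (not_le.mp hu1).le, indicator_of_mem (show u ∈ Ioi 1 from not_le.mp hu1),
      mul_one]
    have : 0 ≤ min 1 (u ^ 2) := by positivity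
    nlinarith

lemma abs_integral_deriv_mul_sub_le {W g : ℝ → ℝ} {A x u D J : ℝ} (hx : A ≤ x) (hu : 0 ≤ u)
    (hD : ∀ y ∈ Ioc 0 (x - A), |deriv W y| ≤ D) (hJ : ∀ ζ ∈ Icc (A - u) A, |g ζ - g A| ≤ J) :
    |∫ z in (0:ℝ)..min u (x - A), deriv W (x - z - A) * (g (z + A - u) - g A)|
      ≤ D * J * min u (x - A) := by
  have hm0 : 0 ≤ min u (x - A) := le_min hu (by linarith)
  have hbound : ∀ᵐ z, z ∈ uIoc 0 (min u (x - A)) →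
      ‖deriv W (x - z - A) * (g (z + A - u) - g A)‖ ≤ D * J := by
    filter_upwards [volume.ae_ne (min u (x - A))] with z hzm hz
    rw [uIoc_of_le hm0] at hz
    have hzm' : z < min u (x - A) := lt_of_le_of_ne hz.2 hzm
    have hmu := min_le_left u (x - A)
    have hmx := min_le_right u (x - A)
    have hW := hD (x - z - A) ⟨by linarith, by linarith [hz.1]⟩
    rw [Real.norm_eq_abs, abs_mul]
    exact mul_le_mul hW (hJ _ ⟨by linarith [hz.1], by linarith⟩) (abs_nonneg _)
      ((abs_nonneg _).trans hW)
  simpa [abs_of_nonneg hm0] using intervalIntegral.norm_integral_le_of_norm_le_const_ae hbound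

lemma tendsto_setIntegral_Ioi_of_norm_le_mul_min {ν : Measure ℝ} {A : ℝ} {F : ℝ → ℝ → ℝ}
    {h : ℝ → ℝ} (hFm : ∀ x, AEStronglyMeasurable (F x) (ν.restrict (Ioi 0)))
    (hF : ∀ x ∈ Ioc A (A + 1), ∀ u ∈ Ioi (0:ℝ), ‖F x u‖ ≤ h u * min u (x - A))
    (hh : IntegrableOn (fun u => h u * min u 1) (Ioi 0) ν) (hh0 : ∀ u, 0 ≤ h u) :
    Tendsto (fun x => ∫ u in Ioi 0, F x u ∂ν) (𝓝[>] A) (𝓝 0) := by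
  have hnear : Ioc A (A + 1) ∈ 𝓝[>] A := Ioc_mem_nhdsGT (by linarith)
  have hlim := tendsto_integral_filter_of_dominated_convergence (f := fun _ => 0) _
    (Eventually.of_forall hFm)
    (by
      filter_upwards [hnear] with x hx
      filter_upwards [ae_restrict_mem measurableSet_Ioi] with u hu
      refine (hF x hx u hu).trans ?_
      gcongr
      · exact hh0 u
      · linarith [hx.2])
    hh
    (by
      filter_upwards [ae_restrict_mem measurableSet_Ioi] with u hu
      refine squeeze_zero_norm' (eventually_of_mem hnear fun x hx => hF x hx u hu) ?_
      refine (Continuous.tendsto' (by fun_prop) A _ ?_).mono_left nhdsWithin_le_nhds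
      simp [min_eq_right (le_of_lt (mem_Ioi.mp hu))])
  rwa [integral_zero] at hlim

theorem phi_deriv_tendsto_zero_general
    (ν : Measure ℝ) (Φ A C L : ℝ) (g W : ℝ → ℝ)
    (hν : ∫⁻ z in Set.Ioi (0:ℝ), ENNReal.ofReal (min 1 (z ^ 2)) ∂ν < ⊤)
    (hΦ : 0 < Φ)
    (hgm : Measurable g)
    (hgb : ∀ K : Set ℝ, IsCompact K → ∃ M : ℝ, ∀ y ∈ K, |g y| ≤ M)
    (hWm : MonotoneOn W (Set.Ici 0))
    (hWd : ∀ y ∈ Set.Ioi (0:ℝ), DifferentiableAt ℝ W y)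
    (hWΦb : ∀ y ∈ Set.Ici (0:ℝ), Real.exp (-Φ * y) * W y ≤ C)
    (hL : ∀ y ∈ Set.Ioi (0:ℝ), deriv (fun t => Real.exp (-Φ * t) * W t) y ≤ L)
    (hC1 : ∃ ε > (0:ℝ), ContDiffOn ℝ 2 g (Set.Ioo (A - ε) (A + ε)))
    (hC2 : ∫⁻ u in Set.Ioi (1:ℝ),
        ENNReal.ofReal (sSup ((fun ζ => |g ζ - g A|) '' Set.Icc (A - u) A)) ∂ν < ⊤) :
    Filter.Tendsto
      (fun x => ∫ u in Set.Ioi (0:ℝ),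
        (∫ z in (0:ℝ)..(min u (x - A)), deriv W (x - z - A) * (g (z + A - u) - g A)) ∂ν)
      (nhdsWithin A (Set.Ioi A)) (nhds 0) := by
  obtain ⟨ε, hε, hg⟩ := hC1
  have hgA : ContDiffAt ℝ 1 g A :=
    (hg.contDiffAt (Ioo_mem_nhds (by linarith) (by linarith))).of_le (by norm_num)
  have hD := abs_deriv_le_of_exp_neg_mul_bounds hΦ.le hWm hWd hWΦb hL
  have hD0 : 0 ≤ exp Φ * (L + Φ * C) := (abs_nonneg _).trans (hD 1 ⟨one_pos, le_rfl⟩)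
  refine tendsto_setIntegral_Ioi_of_norm_le_mul_min
    (h := fun u => exp Φ * (L + Φ * C) * leftOscillation g A u)
    (fun x => (measurable_intervalIntegral_of_measurable_uncurry (by fun_prop) measurable_const
      (by fun_prop)).aestronglyMeasurable)
    (fun x hx u hu => abs_integral_deriv_mul_sub_le hx.1.le (le_of_lt hu)
      (fun y hy => hD y ⟨hy.1, by linarith [hy.2, hx.2]⟩) (abs_sub_le_leftOscillation hgb))
    ?_ (fun u => mul_nonneg hD0 (leftOscillation_nonneg u))
  have hint := (integrableOn_leftOscillation_mul_min hν hgA hgb hC2).const_mul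
    (exp Φ * (L + Φ * C))
  simp only [← mul_assoc] at hint
  exact hint

/-- under (C1)-(C2),
`φ_{g,A}'(A+) = lim_{x↓A} ∫_{(0,∞)} ν(du) ∫_0^{min(u,x−A)} W'(x−z−A)(g(z+A−u) − g(A)) dz = 0`. -/
theorem phi_deriv_tendsto_zero
    (ν : Measure ℝ) (Φ A C L : ℝ) (g W : ℝ → ℝ)
    (hν : ∫⁻ z in Set.Ioi (0:ℝ), ENNReal.ofReal (min 1 (z ^ 2)) ∂ν < ⊤)
    (hΦ : 0 < Φ)
    (hgm : Measurable g)
    (hgb : ∀ K : Set ℝ, IsCompact K → ∃ M : ℝ, ∀ y ∈ K, |g y| ≤ M)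
    (hW0 : ∀ y < (0:ℝ), W y = 0)
    (hWc : ContinuousOn W (Set.Ici 0))
    (hWm : MonotoneOn W (Set.Ici 0))
    (hWd : ∀ y ∈ Set.Ioi (0:ℝ), DifferentiableAt ℝ W y)
    (hWd' : ContinuousOn (deriv W) (Set.Ioi 0))
    (hWΦm : MonotoneOn (fun y => Real.exp (-Φ * y) * W y) (Set.Ici 0))
    (hWΦb : ∀ y ∈ Set.Ici (0:ℝ), Real.exp (-Φ * y) * W y ≤ C)
    (hL : ∀ y ∈ Set.Ioi (0:ℝ), deriv (fun t => Real.exp (-Φ * t) * W t) y ≤ L)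
    (hC1 : ∃ ε > (0:ℝ), ContDiffOn ℝ 2 g (Set.Ioo (A - ε) (A + ε)))
    (hC2 : ∫⁻ u in Set.Ioi (1:ℝ),
        ENNReal.ofReal (sSup ((fun ζ => |g ζ - g A|) '' Set.Icc (A - u) A)) ∂ν < ⊤) :
    Filter.Tendsto
      (fun x => ∫ u in Set.Ioi (0:ℝ),
        (∫ z in (0:ℝ)..(min u (x - A)), deriv W (x - z - A) * (g (z + A - u) - g A)) ∂ν)
      (nhdsWithin A (Set.Ioi A)) (nhds 0) :=
  phi_deriv_tendsto_zero_general ν Φ A C L g W hν hΦ hgm hgb hWm hWd hWΦb hL hC1 hC2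
end

section
/- Fix A ∈ ℝ and assume: (C1) g is C² on an open neighborhood of A; (C2) ∫_{(1,∞)} Π(du) · max_{A−u ≤ ζ ≤ A} |g(ζ) − g(A)| < ∞. Then lim_{x↓A} U_A'(x) = W'(0+)·Ψ(A). In particular, if W'(0+) = 2/σ² for a constant σ > 0, then the smooth-fit condition lim_{x↓A} U_A'(x) = g'(A) holds if and only if Ψ(A) = (σ²/2) g'(A). -/
open MeasureTheory Real Set Filter
open scoped Topology

/-!
On `(A, A + 1)` the function `U_A` is differentiated term by term. Both `φ_{g,A}(x)` and
`∫_A^x W(x - y) h(y) dy` integrate `W(x - A - z)` against a kernel; since `W` vanishes on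
`(-∞, 0]` and is Lipschitz on `(-∞, 1]`, they can be differentiated under the integral sign, the
jump kernel being dominated, uniformly in `x`, by `u ↦ ∫_0^{min(u,1)} |g(z + A - u) - g(A)| dz`.
That function is `O(u²)` as `u ↓ 0` by (C1) and bounded by the supremum in (C2) for `u > 1`, so
it is `ν`-integrable. The differentiated integrands contain `W'(x - A - z)`, which vanishes for
`z > x - A`, so by dominated convergence both derivatives tend to `0` as `x ↓ A`, while
`W(x - A) → 0` and `W'(x - A) → W'(0+)`: what remains is `W'(0+) Ψ(A)`.
-/

/-- `Z(x) = 1 + q ∫_0^{max(x,0)} W(y) dy`. -/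
noncomputable def Zfun (q : ℝ) (W : ℝ → ℝ) (x : ℝ) : ℝ :=
  1 + q * ∫ y in (0:ℝ)..(max x 0), W y

/-- `ρ_{g,B} = ∫_{(0,∞)} ν(du) ∫_0^u e^{−Φz}(g(z+B−u) − g(B)) dz`. -/
noncomputable def rhoFun (ν : Measure ℝ) (Φ : ℝ) (g : ℝ → ℝ) (B : ℝ) : ℝ :=
  ∫ u in Set.Ioi (0:ℝ), (∫ z in (0:ℝ)..u, Real.exp (-Φ * z) * (g (z + B - u) - g B)) ∂ν

/-- `φ_{g,B}(x) = ∫_{(0,∞)} ν(du) ∫_0^{min(u,x−B)} W(x−z−B)(g(z+B−u) − g(B)) dz`. -/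
noncomputable def phiFun (ν : Measure ℝ) (W g : ℝ → ℝ) (B x : ℝ) : ℝ :=
  ∫ u in Set.Ioi (0:ℝ),
    (∫ z in (0:ℝ)..(min u (x - B)), W (x - z - B) * (g (z + B - u) - g B)) ∂ν

/-- `∫_0^∞ e^{−Φy} h(y+B) dy`. -/
noncomputable def hInt (Φ : ℝ) (h : ℝ → ℝ) (B : ℝ) : ℝ :=
  ∫ y in Set.Ioi (0:ℝ), Real.exp (-Φ * y) * h (y + B)

/-- `Ψ(B) = −(q/Φ) g(B) + ρ_{g,B} + ∫_0^∞ e^{−Φy} h(y+B) dy`. -/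
noncomputable def PsiFun (q Φ : ℝ) (ν : Measure ℝ) (g h : ℝ → ℝ) (B : ℝ) : ℝ :=
  -(q / Φ) * g B + rhoFun ν Φ g B + hInt Φ h B

/-- Expected discounted payoff of the threshold strategy at level `B`, for `x > B`. -/
noncomputable def Ufun (q Φ : ℝ) (ν : Measure ℝ) (W g h : ℝ → ℝ) (B x : ℝ) : ℝ :=
  g B * (Zfun q W (x - B) - q / Φ * W (x - B)) + W (x - B) * rhoFun ν Φ g B -
    phiFun ν W g B x + W (x - B) * hInt Φ h B - ∫ y in B..x, W (x - y) * h y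

lemma deriv_eq_zero_of_eqOn_Iic {f : ℝ → ℝ} {a : ℝ} (hf : EqOn f 0 (Iic a)) :
    deriv f a = 0 := by
  by_cases hd : DifferentiableAt ℝ f a
  · exact (uniqueDiffWithinAt_Iic a).eq_deriv _ hd.hasDerivAt.hasDerivWithinAt
      ((hasDerivWithinAt_const a _ 0).congr hf (hf self_mem_Iic))
  · exact deriv_zero_of_not_differentiableAt hd

lemma measurable_setIntegral_Ioc {α : Type*} [MeasurableSpace α] {f : α → ℝ → ℝ}
    (hf : Measurable (Function.uncurry f)) {c : α → ℝ} (hc : Measurable c) (a : ℝ) :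
    Measurable fun u => ∫ z in Ioc a (c u), f u z := by
  have hind : Measurable fun p : α × ℝ => (Ioc a (c p.1)).indicator (f p.1) p.2 :=
    Measurable.ite ((measurableSet_lt measurable_const measurable_snd).inter
      (measurableSet_le measurable_snd (hc.comp measurable_fst))) hf measurable_const
  simp_rw [← integral_indicator measurableSet_Ioc]
  exact (hind.stronglyMeasurable.integral_prod_right' (ν := volume)).measurable

lemma integrableOn_Ioc_of_forall_isCompact_abs_le {f : ℝ → ℝ} (hf : Measurable f)
    (hb : ∀ K : Set ℝ, IsCompact K → ∃ M : ℝ, ∀ y ∈ K, |f y| ≤ M) (a b : ℝ) :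
    IntegrableOn f (Ioc a b) := by
  obtain ⟨M, hM⟩ := hb (Icc a b) isCompact_Icc
  exact Measure.integrableOn_of_bounded (by simp) hf.aestronglyMeasurable
    ((ae_restrict_iff' measurableSet_Ioc).2 <| Eventually.of_forall fun y hy =>
      hM y (Ioc_subset_Icc_self hy))

structure IsScaleKernel (W : ℝ → ℝ) (M : ℝ) : Prop where
  continuous : Continuous W
  eq_zero_of_nonpos : ∀ y ≤ 0, W y = 0
  hasDerivAt : ∀ s ≠ 0, HasDerivAt W (deriv W s) s
  abs_deriv_le : ∀ s ≤ 1, |deriv W s| ≤ M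

namespace IsScaleKernel

variable {W : ℝ → ℝ} {M : ℝ}

lemma deriv_eq_zero_of_nonpos (hW : IsScaleKernel W M) {s : ℝ} (hs : s ≤ 0) : deriv W s = 0 :=
  deriv_eq_zero_of_eqOn_Iic fun y hy => hW.eq_zero_of_nonpos y (hy.out.trans hs)

lemma nonneg (hW : IsScaleKernel W M) : 0 ≤ M :=
  (abs_nonneg _).trans (hW.abs_deriv_le 0 zero_le_one)

lemma abs_sub_le (hW : IsScaleKernel W M) {a b : ℝ} (ha : a ≤ 1) (hb : b ≤ 1) :
    |W b - W a| ≤ M * |b - a| := by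
  have hsub : uIcc a b ⊆ Iic 1 := fun s hs => hs.2.trans (max_le ha hb)
  have hint : IntervalIntegrable (deriv W) volume a b :=
    (intervalIntegrable_iff.2 <| Measure.integrableOn_of_bounded (by simp)
      (measurable_deriv W).aestronglyMeasurable (M := M) <|
      (ae_restrict_iff' measurableSet_uIoc).2 <| Eventually.of_forall fun s hs =>
        hW.abs_deriv_le s (hsub (uIoc_subset_uIcc hs)))
  rw [← integral_eq_of_hasDerivAt_off_countable W (deriv W) (countable_singleton 0)
    hW.continuous.continuousOn (fun s hs => hW.hasDerivAt s hs.2) hint]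
  exact intervalIntegral.norm_integral_le_of_norm_le_const (f := deriv W) fun s hs =>
    hW.abs_deriv_le s (hsub (uIoc_subset_uIcc hs))

section

variable {k : ℝ → ℝ} {a b : ℝ}

lemma integrableOn_comp_sub_mul (hW : IsScaleKernel W M) (hk : IntegrableOn k (Ioc a b)) (x : ℝ) :
    IntegrableOn (fun y => W (x - y) * k y) (Ioc a b) :=
  (((integrableOn_Icc_iff_integrableOn_Ioc).2 hk).continuousOn_mul
    (hW.continuous.comp (continuous_sub_left x)).continuousOn isCompact_Icc).mono_set
    Ioc_subset_Icc_self

lemma abs_integral_sub_integral_le (hW : IsScaleKernel W M) (hk : IntegrableOn k (Ioc a b))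
    {x x' : ℝ} (hx : x ≤ a + 1) (hx' : x' ≤ a + 1) :
    |(∫ y in Ioc a b, W (x - y) * k y) - ∫ y in Ioc a b, W (x' - y) * k y|
      ≤ M * |x - x'| * ∫ y in Ioc a b, |k y| := by
  rw [← integral_sub (hW.integrableOn_comp_sub_mul hk x) (hW.integrableOn_comp_sub_mul hk x'),
    ← integral_const_mul]
  refine norm_integral_le_of_norm_le (f := fun y => W (x - y) * k y - W (x' - y) * k y)
    (hk.abs.const_mul _) <| (ae_restrict_iff' measurableSet_Ioc).2 <|
    Eventually.of_forall fun y hy => ?_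
  have hW_sub : |W (x - y) - W (x' - y)| ≤ M * |x - x'| := by
    simpa using hW.abs_sub_le (b := x - y) (a := x' - y) (by linarith [hy.1]) (by linarith [hy.1])
  rw [Real.norm_eq_abs, ← sub_mul, abs_mul]
  exact mul_le_mul_of_nonneg_right hW_sub (abs_nonneg _)

lemma abs_integral_deriv_le (hW : IsScaleKernel W M) (hk : IntegrableOn k (Ioc a b)) {x : ℝ}
    (hx : x ≤ a + 1) :
    |∫ y in Ioc a b, deriv W (x - y) * k y| ≤ M * ∫ y in Ioc a b, |k y| := by
  rw [← integral_const_mul]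
  refine norm_integral_le_of_norm_le (f := fun y => deriv W (x - y) * k y) (hk.abs.const_mul _) <|
    (ae_restrict_iff' measurableSet_Ioc).2 <| Eventually.of_forall fun y hy => ?_
  rw [Real.norm_eq_abs, abs_mul]
  exact mul_le_mul_of_nonneg_right (hW.abs_deriv_le _ (by linarith [hy.1])) (abs_nonneg _)

lemma hasDerivAt_integral (hW : IsScaleKernel W M) (hk : IntegrableOn k (Ioc a b)) {x₀ : ℝ}
    (hx₀ : x₀ < a + 1) :
    HasDerivAt (fun x => ∫ y in Ioc a b, W (x - y) * k y)
      (∫ y in Ioc a b, deriv W (x₀ - y) * k y) x₀ := by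
  have hball : Metric.ball x₀ (a + 1 - x₀) ⊆ Iic (a + 1) := fun x hx => by
    rw [Metric.mem_ball, Real.dist_eq, abs_lt] at hx
    exact mem_Iic.2 (by linarith)
  refine (hasDerivAt_integral_of_dominated_loc_of_lip (F := fun x y => W (x - y) * k y)
    (bound := fun y => M * |k y|)
    (Metric.ball_mem_nhds x₀ (sub_pos.2 hx₀))
    (Eventually.of_forall fun x => (hW.integrableOn_comp_sub_mul hk x).aestronglyMeasurable)
    (hW.integrableOn_comp_sub_mul hk x₀)
    (((measurable_deriv W).comp (measurable_const_sub x₀)).aestronglyMeasurable.mul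
      hk.aestronglyMeasurable) ?_ (hk.abs.const_mul M) ?_).2
  · refine (ae_restrict_iff' measurableSet_Ioc).2 <| Eventually.of_forall fun y hy =>
      LipschitzOnWith.of_dist_le_mul fun x hx x' hx' => ?_
    have hW_sub := hW.abs_sub_le (b := x - y) (a := x' - y)
      (by linarith [hy.1, (hball hx').out]) (by linarith [hy.1, (hball hx).out])
    rw [Real.dist_eq, Real.dist_eq, Real.coe_nnabs, ← sub_mul, abs_mul,
      abs_of_nonneg (mul_nonneg hW.nonneg (abs_nonneg _))]
    calc |W (x - y) - W (x' - y)| * |k y| ≤ M * |x - x'| * |k y| := by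
          refine mul_le_mul_of_nonneg_right (by simpa using hW_sub) (abs_nonneg _)
      _ = M * |k y| * |x - x'| := by ring
  · filter_upwards [ae_restrict_of_ae (volume.ae_ne x₀)] with y hy
    simpa using ((hW.hasDerivAt _ (sub_ne_zero.2 hy.symm)).comp x₀
      ((hasDerivAt_id x₀).sub_const y)).mul_const (k y)

lemma integral_eq_zero_of_le (hW : IsScaleKernel W M) {x : ℝ} (hx : x ≤ a) :
    ∫ y in Ioc a b, W (x - y) * k y = 0 := by
  refine setIntegral_eq_zero_of_forall_eq_zero fun y hy => ?_
  rw [hW.eq_zero_of_nonpos _ (by linarith [hy.1]), zero_mul]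

lemma tendsto_integral_deriv (hW : IsScaleKernel W M) (hk : IntegrableOn k (Ioc a b)) :
    Tendsto (fun x => ∫ y in Ioc a b, deriv W (x - y) * k y) (𝓝[>] a) (𝓝 0) := by
  have hlim := tendsto_integral_filter_of_dominated_convergence (l := 𝓝[>] a)
    (μ := volume.restrict (Ioc a b)) (F := fun x y => deriv W (x - y) * k y) (f := fun _ => 0)
    (fun y => M * |k y|)
    (Eventually.of_forall fun x => ((measurable_deriv W).comp
      (measurable_const_sub x)).aestronglyMeasurable.mul hk.aestronglyMeasurable)
    ?_ (hk.abs.const_mul M) ?_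
  · simpa using hlim
  · filter_upwards [Ioo_mem_nhdsGT (show a < a + 1 by linarith)] with x hx
    refine (ae_restrict_iff' measurableSet_Ioc).2 <| Eventually.of_forall fun y hy => ?_
    rw [Real.norm_eq_abs, abs_mul]
    exact mul_le_mul_of_nonneg_right (hW.abs_deriv_le _ (by linarith [hy.1, hx.2]))
      (abs_nonneg _)
  · refine (ae_restrict_iff' measurableSet_Ioc).2 <| Eventually.of_forall fun y hy =>
      tendsto_const_nhds.congr' ?_
    filter_upwards [Ioo_mem_nhdsGT hy.1] with x hx
    rw [hW.deriv_eq_zero_of_nonpos (by linarith [hx.2]), zero_mul]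

end

section

variable {α : Type*} [MeasurableSpace α] {μ : Measure α} {k : α → ℝ → ℝ}
  {c : α → ℝ}

lemma hasDerivAt_integral_integral (hW : IsScaleKernel W M)
    (hkm : Measurable (Function.uncurry k)) (hc : Measurable c)
    (hk : ∀ u, IntegrableOn (k u) (Ioc 0 (c u)))
    (hB : Integrable (fun u => ∫ z in Ioc 0 (c u), |k u z|) μ) {s₀ : ℝ} (hs₀ : s₀ < 1) :
    HasDerivAt (fun s => ∫ u, (∫ z in Ioc 0 (c u), W (s - z) * k u z) ∂μ)
      (∫ u, (∫ z in Ioc 0 (c u), deriv W (s₀ - z) * k u z) ∂μ) s₀ := by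
  have hball : Metric.ball s₀ (1 - s₀) ⊆ Iic (0 + 1) := fun s hs => by
    rw [Metric.mem_ball, Real.dist_eq, abs_lt] at hs
    exact mem_Iic.2 (by linarith)
  have hmeas : ∀ s, Measurable fun u => ∫ z in Ioc 0 (c u), W (s - z) * k u z := fun s =>
    measurable_setIntegral_Ioc
      ((hW.continuous.measurable.comp (measurable_const.sub measurable_snd)).mul hkm) hc 0
  have hlip : ∀ u, ∀ s ∈ Iic (0 + 1), ∀ s' ∈ Iic (0 + 1),
      |(∫ z in Ioc 0 (c u), W (s - z) * k u z) - ∫ z in Ioc 0 (c u), W (s' - z) * k u z|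
        ≤ M * (∫ z in Ioc 0 (c u), |k u z|) * |s - s'| := fun u s hs s' hs' => by
    rw [mul_right_comm]
    exact hW.abs_integral_sub_integral_le (hk u) hs hs'
  refine (hasDerivAt_integral_of_dominated_loc_of_lip
    (F := fun s u => ∫ z in Ioc 0 (c u), W (s - z) * k u z)
    (bound := fun u => M * ∫ z in Ioc 0 (c u), |k u z|)
    (Metric.ball_mem_nhds s₀ (sub_pos.2 hs₀))
    (Eventually.of_forall fun s => (hmeas s).aestronglyMeasurable) ?_
    (measurable_setIntegral_Ioc (((measurable_deriv W).comp
      (measurable_const.sub measurable_snd)).mul hkm) hc 0).aestronglyMeasurable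
    (Eventually.of_forall fun u => LipschitzOnWith.of_dist_le_mul fun s hs s' hs' => ?_)
    (hB.const_mul M)
    (Eventually.of_forall fun u => hW.hasDerivAt_integral (hk u) (by linarith))).2
  -- compare with `s = 0`, where the inner integrals vanish
  · refine (hB.const_mul (M * |s₀|)).mono' (hmeas s₀).aestronglyMeasurable <|
      Eventually.of_forall fun u => ?_
    have := hlip u s₀ (by simp [hs₀.le]) 0 (by simp)
    rwa [hW.integral_eq_zero_of_le le_rfl, sub_zero, sub_zero, mul_right_comm] at this
  · rw [Real.dist_eq, Real.dist_eq, Real.coe_nnabs,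
      abs_of_nonneg (mul_nonneg hW.nonneg (integral_nonneg fun _ => abs_nonneg _))]
    exact hlip u s (hball hs) s' (hball hs')

lemma tendsto_integral_integral_deriv (hW : IsScaleKernel W M)
    (hkm : Measurable (Function.uncurry k)) (hc : Measurable c)
    (hk : ∀ u, IntegrableOn (k u) (Ioc 0 (c u)))
    (hB : Integrable (fun u => ∫ z in Ioc 0 (c u), |k u z|) μ) :
    Tendsto (fun s => ∫ u, (∫ z in Ioc 0 (c u), deriv W (s - z) * k u z) ∂μ)
      (𝓝[>] 0) (𝓝 0) := by
  have hlim := tendsto_integral_filter_of_dominated_convergence (l := 𝓝[>] 0) (μ := μ)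
    (F := fun s u => ∫ z in Ioc 0 (c u), deriv W (s - z) * k u z) (f := fun _ => 0)
    (fun u => M * ∫ z in Ioc 0 (c u), |k u z|)
    (Eventually.of_forall fun s => (measurable_setIntegral_Ioc (((measurable_deriv W).comp
      (measurable_const.sub measurable_snd)).mul hkm) hc 0).aestronglyMeasurable)
    ?_ (hB.const_mul M) (Eventually.of_forall fun u => hW.tendsto_integral_deriv (hk u))
  · simpa using hlim
  · filter_upwards [Ioo_mem_nhdsGT (show (0 : ℝ) < 0 + 1 by norm_num)] with s hs
    exact Eventually.of_forall fun u => hW.abs_integral_deriv_le (hk u) hs.2.le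

end

end IsScaleKernel

lemma tendsto_sub_nhdsGT (a : ℝ) : Tendsto (fun x => x - a) (𝓝[>] a) (𝓝[>] 0) :=
  tendsto_nhdsWithin_iff.2
    ⟨by simpa using ((continuous_sub_right a).tendsto a).mono_left nhdsWithin_le_nhds,
      eventually_nhdsWithin_of_forall fun _ hx => mem_Ioi.2 (sub_pos.2 hx)⟩

lemma exists_abs_le_of_tendsto_nhdsGT {f : ℝ → ℝ} {L : ℝ} (hf : ContinuousOn f (Ioi 0))
    (hlim : Tendsto f (𝓝[>] 0) (𝓝 L)) : ∃ C, ∀ s ∈ Ioc (0 : ℝ) 1, |f s| ≤ C := by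
  obtain ⟨δ, hδ, hnear⟩ := mem_nhdsGT_iff_exists_Ioo_subset.1
    (hlim.abs.eventually_le_const (lt_add_one |L|))
  obtain ⟨C, hC⟩ := isCompact_Icc.exists_bound_of_continuousOn
    (hf.mono fun s (hs : s ∈ Icc (δ / 2) 1) => (half_pos hδ).trans_le hs.1)
  refine ⟨max (|L| + 1) C, fun s hs => ?_⟩
  rcases lt_or_ge s δ with hsδ | hsδ
  · exact (hnear ⟨hs.1, hsδ⟩).out.trans (le_max_left _ _)
  · exact (hC s ⟨by linarith [mem_Ioi.1 hδ], hs.2⟩).trans (le_max_right _ _)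

lemma exists_isScaleKernel {W : ℝ → ℝ} {W'0 : ℝ} (hW0 : ∀ y < (0 : ℝ), W y = 0)
    (hWzero : W 0 = 0)
    (hWc : ContinuousOn W (Ici 0)) (hWd : ∀ y ∈ Ioi (0 : ℝ), DifferentiableAt ℝ W y)
    (hWd' : ContinuousOn (deriv W) (Ioi 0)) (hW'0 : Tendsto (deriv W) (𝓝[>] 0) (𝓝 W'0)) :
    ∃ M, IsScaleKernel W M := by
  have hnonpos : ∀ y ≤ 0, W y = 0 := fun y hy =>
    hy.lt_or_eq.elim (hW0 y) fun h => h ▸ hWzero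
  have hderiv_nonpos : ∀ s ≤ 0, deriv W s = 0 := fun s hs =>
    deriv_eq_zero_of_eqOn_Iic fun y hy => hnonpos y (hy.out.trans hs)
  obtain ⟨M, hM⟩ := exists_abs_le_of_tendsto_nhdsGT hWd' hW'0
  refine ⟨M, ⟨?_, hnonpos, fun s hs => ?_, fun s hs => ?_⟩⟩
  · have hW_max : W = fun y => W (max y 0) := funext fun y =>
      (le_total y 0).elim (fun hy => by rw [hnonpos y hy, max_eq_right hy, hWzero])
        fun hy => by rw [max_eq_left hy]
    rw [hW_max]
    exact hWc.comp_continuous (continuous_id.max continuous_const) fun y => le_max_right y 0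
  · rcases hs.lt_or_gt with hs | hs
    · rw [hderiv_nonpos s hs.le]
      exact (hasDerivAt_const s 0).congr_of_eventuallyEq <|
        eventually_of_mem (Iio_mem_nhds hs) fun y hy => hW0 y hy
    · exact (hWd s hs).hasDerivAt
  · rcases le_or_gt s 0 with hs0 | hs0
    · rw [hderiv_nonpos s hs0, abs_zero]
      exact (abs_nonneg _).trans (hM 1 ⟨one_pos, le_rfl⟩)
    · exact hM s ⟨hs0, hs⟩

lemma exists_abs_sub_le_mul_of_contDiffAt {g : ℝ → ℝ} {A Mg : ℝ} (hg : ContDiffAt ℝ 1 g A)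
    (hbdd : ∀ ζ ∈ Icc (A - 1) A, |g ζ| ≤ Mg) :
    ∃ K, 0 ≤ K ∧ ∀ ζ ∈ Icc (A - 1) A, |g ζ - g A| ≤ K * (A - ζ) := by
  obtain ⟨K, t, ht, hlip⟩ := hg.exists_lipschitzOnWith
  obtain ⟨δ, hδ, hball⟩ := Metric.mem_nhds_iff.1 ht
  have hMg : 0 ≤ Mg := (abs_nonneg _).trans (hbdd A ⟨by linarith, le_rfl⟩)
  have hcoef : 0 ≤ 2 * Mg / δ := by positivity
  refine ⟨K + 2 * Mg / δ, by positivity, fun ζ hζ => ?_⟩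
  have hAζ : 0 ≤ A - ζ := sub_nonneg.2 hζ.2
  rcases lt_or_ge (A - ζ) δ with hnear | hfar
  · have hζt : ζ ∈ t :=
      hball (by rwa [Metric.mem_ball, Real.dist_eq, abs_sub_comm, abs_of_nonneg hAζ])
    have := hlip.dist_le_mul ζ hζt A (hball (Metric.mem_ball_self hδ))
    rw [Real.dist_eq, Real.dist_eq, abs_sub_comm ζ, abs_of_nonneg hAζ] at this
    nlinarith
  · calc |g ζ - g A| ≤ |g ζ| + |g A| := abs_sub _ _
      _ ≤ 2 * Mg := by linarith [hbdd ζ hζ, hbdd A ⟨by linarith, le_rfl⟩]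
      _ = 2 * Mg / δ * δ := by field_simp
      _ ≤ 2 * Mg / δ * (A - ζ) := mul_le_mul_of_nonneg_left hfar hcoef
      _ ≤ (K + 2 * Mg / δ) * (A - ζ) := by nlinarith [K.coe_nonneg]

lemma integrableOn_Ioi_of_abs_le_mul_sq {ν : Measure ℝ} {B : ℝ → ℝ} {K : ℝ}
    (hν : ∫⁻ z in Ioi (0 : ℝ), ENNReal.ofReal (min 1 (z ^ 2)) ∂ν < ⊤)
    (hB : AEStronglyMeasurable B (ν.restrict (Ioc 0 1)))
    (hsmall : ∀ u ∈ Ioc (0 : ℝ) 1, |B u| ≤ K * u ^ 2) (hlarge : IntegrableOn B (Ioi 1) ν) :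
    IntegrableOn B (Ioi 0) ν := by
  have hmin : IntegrableOn (fun z : ℝ => min 1 (z ^ 2)) (Ioi 0) ν :=
    ⟨(by fun_prop : Measurable fun z : ℝ => min 1 (z ^ 2)).aestronglyMeasurable,
      (hasFiniteIntegral_iff_ofReal (Eventually.of_forall fun z =>
        le_min zero_le_one (sq_nonneg z))).2 hν⟩
  rw [← Ioc_union_Ioi_eq_Ioi zero_le_one]
  refine IntegrableOn.union (((hmin.mono_set Ioc_subset_Ioi_self).const_mul K).mono' hB <|
    (ae_restrict_iff' measurableSet_Ioc).2 <| Eventually.of_forall fun u hu => ?_) hlarge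
  rw [Real.norm_eq_abs, min_eq_right (by nlinarith [hu.1, hu.2])]
  exact hsmall u hu

section JumpIntegral

variable {ν : Measure ℝ} {g : ℝ → ℝ} {A : ℝ}

lemma measurable_uncurry_sub_comp_add_sub (hgm : Measurable g) :
    Measurable (Function.uncurry fun u z => g (z + A - u) - g A) :=
  (hgm.comp ((measurable_snd.add_const A).sub measurable_fst)).sub measurable_const

lemma integrableOn_sub_comp_add_sub (hgm : Measurable g)
    (hgb : ∀ K : Set ℝ, IsCompact K → ∃ M : ℝ, ∀ y ∈ K, |g y| ≤ M) (u : ℝ) :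
    IntegrableOn (fun z => g (z + A - u) - g A) (Ioc 0 (min u 1)) := by
  obtain ⟨M, hM⟩ := hgb (Icc (A - u) A) isCompact_Icc
  refine Measure.integrableOn_of_bounded (M := M + |g A|) (by simp)
    ((hgm.comp ((measurable_id.add_const A).sub_const u)).sub
      measurable_const).aestronglyMeasurable
    ((ae_restrict_iff' measurableSet_Ioc).2 <| Eventually.of_forall fun z hz => ?_)
  have hmem : z + A - u ∈ Icc (A - u) A :=
    ⟨by linarith [hz.1], by linarith [hz.2.trans (min_le_left _ _)]⟩
  exact (abs_sub _ _).trans (by linarith [hM _ hmem])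

lemma measurable_integral_abs_sub (hgm : Measurable g) :
    Measurable fun u => ∫ z in Ioc 0 (min u 1), |g (z + A - u) - g A| :=
  measurable_setIntegral_Ioc (measurable_uncurry_sub_comp_add_sub hgm).abs
    (measurable_id.min measurable_const) 0

lemma integrableOn_Ioi_one_integral_abs_sub (hgm : Measurable g)
    (hgb : ∀ K : Set ℝ, IsCompact K → ∃ M : ℝ, ∀ y ∈ K, |g y| ≤ M)
    (hC2 : ∫⁻ u in Ioi (1 : ℝ),
      ENNReal.ofReal (sSup ((fun ζ => |g ζ - g A|) '' Icc (A - u) A)) ∂ν < ⊤) :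
    IntegrableOn (fun u => ∫ z in Ioc 0 (min u 1), |g (z + A - u) - g A|) (Ioi 1) ν := by
  have hsup : ∀ u, ∀ ζ ∈ Icc (A - u) A,
      |g ζ - g A| ≤ sSup ((fun ζ => |g ζ - g A|) '' Icc (A - u) A) := fun u ζ hζ => by
    obtain ⟨Mu, hMu⟩ := hgb (Icc (A - u) A) isCompact_Icc
    refine le_csSup ⟨Mu + |g A|, ?_⟩ (mem_image_of_mem _ hζ)
    rintro _ ⟨ξ, hξ, rfl⟩
    exact (abs_sub _ _).trans (by linarith [hMu ξ hξ])
  refine ⟨(measurable_integral_abs_sub hgm).aestronglyMeasurable,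
    HasFiniteIntegral.mono' ((hasFiniteIntegral_iff_ofReal ?_).2 hC2) ?_⟩
  · refine (ae_restrict_iff' measurableSet_Ioi).2 <| Eventually.of_forall fun u hu => ?_
    simpa using hsup u A ⟨by linarith [hu.out], le_rfl⟩
  · refine (ae_restrict_iff' measurableSet_Ioi).2 <| Eventually.of_forall fun u hu => ?_
    rw [min_eq_right hu.out.le]
    simpa using norm_setIntegral_le_of_norm_le_const (by simp : volume (Ioc (0 : ℝ) 1) < ⊤)
      fun z hz => (by
        rw [Real.norm_eq_abs, abs_abs]
        exact hsup u _ ⟨by linarith [hz.1], by linarith [hz.2, hu.out]⟩ :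
        ‖|g (z + A - u) - g A|‖ ≤ _)

lemma integrableOn_integral_abs_sub (hgm : Measurable g)
    (hν : ∫⁻ z in Ioi (0 : ℝ), ENNReal.ofReal (min 1 (z ^ 2)) ∂ν < ⊤)
    (hgb : ∀ K : Set ℝ, IsCompact K → ∃ M : ℝ, ∀ y ∈ K, |g y| ≤ M)
    (hg : ContDiffAt ℝ 1 g A)
    (hC2 : ∫⁻ u in Ioi (1 : ℝ),
      ENNReal.ofReal (sSup ((fun ζ => |g ζ - g A|) '' Icc (A - u) A)) ∂ν < ⊤) :
    IntegrableOn (fun u => ∫ z in Ioc 0 (min u 1), |g (z + A - u) - g A|) (Ioi 0) ν := by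
  obtain ⟨Mg, hMg⟩ := hgb (Icc (A - 1) A) isCompact_Icc
  obtain ⟨K, hK, hlip⟩ := exists_abs_sub_le_mul_of_contDiffAt hg hMg
  refine integrableOn_Ioi_of_abs_le_mul_sq (K := K) hν
    (measurable_integral_abs_sub hgm).aestronglyMeasurable (fun u hu => ?_)
    (integrableOn_Ioi_one_integral_abs_sub hgm hgb hC2)
  rw [min_eq_left hu.2]
  have := norm_setIntegral_le_of_norm_le_const (by simp : volume (Ioc (0 : ℝ) u) < ⊤)
    fun z hz => (by
      rw [Real.norm_eq_abs, abs_abs]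
      calc |g (z + A - u) - g A| ≤ K * (A - (z + A - u)) :=
            hlip _ ⟨by linarith [hz.1, hu.2], by linarith [hz.2]⟩
        _ ≤ K * u := mul_le_mul_of_nonneg_left (by linarith [hz.1]) hK :
      ‖|g (z + A - u) - g A|‖ ≤ K * u)
  rw [Real.volume_real_Ioc_of_le hu.1.le, sub_zero, Real.norm_eq_abs] at this
  linarith

end JumpIntegral

lemma hasDerivAt_Zfun {q : ℝ} {W : ℝ → ℝ} (hW : Continuous W) {s : ℝ} (hs : 0 < s) :
    HasDerivAt (Zfun q W) (q * W s) s := by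
  refine (((hW.integral_hasStrictDerivAt 0 s).hasDerivAt.const_mul q).const_add 1)
    |>.congr_of_eventuallyEq ?_
  filter_upwards [Ioi_mem_nhds hs] with y hy
  rw [Zfun, max_eq_left (le_of_lt hy)]

section Ufun

variable {W : ℝ → ℝ} {M : ℝ} {ν : Measure ℝ} {g h : ℝ → ℝ} {A q Φ : ℝ}

lemma phiFun_eq (hW : IsScaleKernel W M) {x : ℝ} (hx : A ≤ x) (hx1 : x ≤ A + 1) :
    phiFun ν W g A x =
      ∫ u in Ioi 0, (∫ z in Ioc 0 (min u 1), W (x - A - z) * (g (z + A - u) - g A)) ∂ν := by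
  refine setIntegral_congr_fun measurableSet_Ioi fun u (hu : 0 < u) => ?_
  simp only [sub_right_comm x _ A]
  rw [intervalIntegral.integral_of_le (le_min hu.le (sub_nonneg.2 hx))]
  refine (setIntegral_eq_of_subset_of_forall_sdiff_eq_zero measurableSet_Ioc
    (Ioc_subset_Ioc_right (min_le_min_left u (by linarith))) fun z hz => ?_).symm
  have hzx : x - A < z := by
    by_contra! hzx
    exact hz.2 ⟨hz.1.1, le_min (hz.1.2.trans (min_le_left _ _)) hzx⟩
  rw [hW.eq_zero_of_nonpos _ (by linarith), zero_mul]

lemma intervalIntegral_eq_setIntegral_Ioc (hW : IsScaleKernel W M) {x : ℝ} (hx : A ≤ x)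
    (hx1 : x ≤ A + 1) :
    ∫ y in A..x, W (x - y) * h y = ∫ y in Ioc A (A + 1), W (x - y) * h y := by
  rw [intervalIntegral.integral_of_le hx]
  refine (setIntegral_eq_of_subset_of_forall_sdiff_eq_zero measurableSet_Ioc
    (Ioc_subset_Ioc_right hx1) fun y hy => ?_).symm
  have hxy : x < y := by
    by_contra! hxy
    exact hy.2 ⟨hy.1.1, hxy⟩
  rw [hW.eq_zero_of_nonpos _ (by linarith), zero_mul]

lemma hasDerivAt_Ufun (hW : IsScaleKernel W M) (hgm : Measurable g)
    (hgb : ∀ K : Set ℝ, IsCompact K → ∃ M : ℝ, ∀ y ∈ K, |g y| ≤ M)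
    (hB : IntegrableOn (fun u => ∫ z in Ioc 0 (min u 1), |g (z + A - u) - g A|) (Ioi 0) ν)
    (hh : IntegrableOn h (Ioc A (A + 1))) {x : ℝ} (hx : x ∈ Ioo A (A + 1)) :
    HasDerivAt (Ufun q Φ ν W g h A)
      (g A * (q * W (x - A) - q / Φ * deriv W (x - A)) + deriv W (x - A) * rhoFun ν Φ g A
        - (∫ u in Ioi 0,
            (∫ z in Ioc 0 (min u 1), deriv W (x - A - z) * (g (z + A - u) - g A)) ∂ν)
        + deriv W (x - A) * hInt Φ h A - ∫ y in Ioc A (A + 1), deriv W (x - y) * h y) x := by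
  have hWA := (hW.hasDerivAt _ (sub_ne_zero.2 hx.1.ne')).comp_sub_const x A
  have hZ := (hasDerivAt_Zfun (q := q) hW.continuous (sub_pos.2 hx.1)).comp_sub_const x A
  have hφ := (hW.hasDerivAt_integral_integral (μ := ν.restrict (Ioi 0))
    (k := fun u z => g (z + A - u) - g A) (c := fun u => min u 1)
    (measurable_uncurry_sub_comp_add_sub hgm) (measurable_id.min measurable_const)
    (integrableOn_sub_comp_add_sub hgm hgb) hB
    (show x - A < 1 by linarith [hx.2])).comp_sub_const x A
  have hH := hW.hasDerivAt_integral hh hx.2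
  refine (((((hZ.sub (hWA.const_mul (q / Φ))).const_mul (g A)).add
    (hWA.mul_const _)).sub hφ).add (hWA.mul_const _)).sub hH
    |>.congr_of_eventuallyEq ?_
  filter_upwards [Ioo_mem_nhds hx.1 hx.2] with y hy
  rw [Ufun, phiFun_eq hW hy.1.le hy.2.le, intervalIntegral_eq_setIntegral_Ioc hW hy.1.le hy.2.le]
  rfl

lemma tendsto_deriv_Ufun (hW : IsScaleKernel W M) {W'0 : ℝ}
    (hW'0 : Tendsto (deriv W) (𝓝[>] 0) (𝓝 W'0)) (hgm : Measurable g)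
    (hgb : ∀ K : Set ℝ, IsCompact K → ∃ M : ℝ, ∀ y ∈ K, |g y| ≤ M)
    (hB : IntegrableOn (fun u => ∫ z in Ioc 0 (min u 1), |g (z + A - u) - g A|) (Ioi 0) ν)
    (hh : IntegrableOn h (Ioc A (A + 1))) :
    Tendsto (deriv (Ufun q Φ ν W g h A)) (𝓝[>] A) (𝓝 (W'0 * PsiFun q Φ ν g h A)) := by
  have hshift := tendsto_sub_nhdsGT A
  have hWA : Tendsto (fun x => W (x - A)) (𝓝[>] A) (𝓝 0) :=
    (hW.continuous.tendsto' 0 0 (hW.eq_zero_of_nonpos 0 le_rfl)).comp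
      (hshift.mono_right nhdsWithin_le_nhds)
  have hW'A := hW'0.comp hshift
  have hφ := (hW.tendsto_integral_integral_deriv (μ := ν.restrict (Ioi 0))
    (k := fun u z => g (z + A - u) - g A) (c := fun u => min u 1)
    (measurable_uncurry_sub_comp_add_sub hgm) (measurable_id.min measurable_const)
    (integrableOn_sub_comp_add_sub hgm hgb) hB).comp hshift
  have hlim := ((((((hWA.const_mul q).sub (hW'A.const_mul (q / Φ))).const_mul (g A)).add
    (hW'A.mul_const (rhoFun ν Φ g A))).sub hφ).add (hW'A.mul_const (hInt Φ h A))).sub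
    (hW.tendsto_integral_deriv hh)
  have hvalue : g A * (q * 0 - q / Φ * W'0) + W'0 * rhoFun ν Φ g A - 0 + W'0 * hInt Φ h A - 0
      = W'0 * PsiFun q Φ ν g h A := by
    rw [PsiFun]
    ring
  rw [← hvalue]
  refine hlim.congr' ?_
  filter_upwards [Ioo_mem_nhdsGT (lt_add_one A)] with x hx
  exact (hasDerivAt_Ufun hW hgm hgb hB hh hx).deriv.symm

end Ufun

theorem smooth_fit_general
    (ν : Measure ℝ) (q Φ A W'0 : ℝ) (g W h : ℝ → ℝ)
    (hν : ∫⁻ z in Set.Ioi (0:ℝ), ENNReal.ofReal (min 1 (z ^ 2)) ∂ν < ⊤)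
    (hgm : Measurable g)
    (hgb : ∀ K : Set ℝ, IsCompact K → ∃ M : ℝ, ∀ y ∈ K, |g y| ≤ M)
    (hW0 : ∀ y < (0:ℝ), W y = 0)
    (hWzero : W 0 = 0)
    (hWc : ContinuousOn W (Set.Ici 0))
    (hWd : ∀ y ∈ Set.Ioi (0:ℝ), DifferentiableAt ℝ W y)
    (hWd' : ContinuousOn (deriv W) (Set.Ioi 0))
    (hW'0 : Filter.Tendsto (deriv W) (nhdsWithin 0 (Set.Ioi 0)) (nhds W'0))
    (hC1 : ∃ ε > (0:ℝ), ContDiffOn ℝ 2 g (Set.Ioo (A - ε) (A + ε)))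
    (hC2 : ∫⁻ u in Set.Ioi (1:ℝ),
        ENNReal.ofReal (sSup ((fun ζ => |g ζ - g A|) '' Set.Icc (A - u) A)) ∂ν < ⊤)
    (hhm : Measurable h)
    (hhb : ∀ K : Set ℝ, IsCompact K → ∃ M : ℝ, ∀ y ∈ K, |h y| ≤ M) :
    Filter.Tendsto (fun x => deriv (Ufun q Φ ν W g h A) x) (nhdsWithin A (Set.Ioi A))
        (nhds (W'0 * PsiFun q Φ ν g h A))
    ∧ ∀ σ : ℝ, 0 < σ → W'0 = 2 / σ ^ 2 →
        (Filter.Tendsto (fun x => deriv (Ufun q Φ ν W g h A) x)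
            (nhdsWithin A (Set.Ioi A)) (nhds (deriv g A)) ↔
          PsiFun q Φ ν g h A = σ ^ 2 / 2 * deriv g A) := by
  obtain ⟨M, hW⟩ := exists_isScaleKernel hW0 hWzero hWc hWd hWd' hW'0
  obtain ⟨ε, hε, hg⟩ := hC1
  have hgA : ContDiffAt ℝ 1 g A :=
    (hg.contDiffAt (Ioo_mem_nhds (by linarith) (by linarith))).of_le (by norm_num)
  have hlim := tendsto_deriv_Ufun (q := q) (Φ := Φ) hW hW'0 hgm hgb
    (integrableOn_integral_abs_sub hgm hν hgb hgA hC2)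
    (integrableOn_Ioc_of_forall_isCompact_abs_le hhm hhb A (A + 1))
  refine ⟨hlim, fun σ hσ hWσ => ?_⟩
  have hvalue : W'0 * PsiFun q Φ ν g h A = deriv g A ↔
      PsiFun q Φ ν g h A = σ ^ 2 / 2 * deriv g A := by
    rw [hWσ]
    constructor <;> intro hΨ <;> [rw [← hΨ]; rw [hΨ]] <;> field_simp
  exact ⟨fun hd => hvalue.1 (tendsto_nhds_unique hlim hd), fun hΨ => hvalue.2 hΨ ▸ hlim⟩

/-- Smooth fit: under (C1)-(C2), `lim_{x↓A} U_A'(x) = W'(0+)Ψ(A)`;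
in particular if `W'(0+) = 2/σ²` for some `σ > 0`, then the smooth-fit condition
`lim_{x↓A} U_A'(x) = g'(A)` holds iff `Ψ(A) = (σ²/2)g'(A)`. -/
theorem smooth_fit
    (ν : Measure ℝ) (q Φ A C L W'0 : ℝ) (g W h : ℝ → ℝ)
    (hν : ∫⁻ z in Set.Ioi (0:ℝ), ENNReal.ofReal (min 1 (z ^ 2)) ∂ν < ⊤)
    (hq : 0 < q) (hΦ : 0 < Φ)
    (hgm : Measurable g)
    (hgb : ∀ K : Set ℝ, IsCompact K → ∃ M : ℝ, ∀ y ∈ K, |g y| ≤ M)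
    (hW0 : ∀ y < (0:ℝ), W y = 0)
    (hWzero : W 0 = 0)
    (hWc : ContinuousOn W (Set.Ici 0))
    (hWm : MonotoneOn W (Set.Ici 0))
    (hWd : ∀ y ∈ Set.Ioi (0:ℝ), DifferentiableAt ℝ W y)
    (hWd' : ContinuousOn (deriv W) (Set.Ioi 0))
    (hW'0 : Filter.Tendsto (deriv W) (nhdsWithin 0 (Set.Ioi 0)) (nhds W'0))
    (hWΦm : MonotoneOn (fun y => Real.exp (-Φ * y) * W y) (Set.Ici 0))
    (hWΦb : ∀ y ∈ Set.Ici (0:ℝ), Real.exp (-Φ * y) * W y ≤ C)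
    (hL : ∀ y ∈ Set.Ioi (0:ℝ), deriv (fun t => Real.exp (-Φ * t) * W t) y ≤ L)
    (hC1 : ∃ ε > (0:ℝ), ContDiffOn ℝ 2 g (Set.Ioo (A - ε) (A + ε)))
    (hC2 : ∫⁻ u in Set.Ioi (1:ℝ),
        ENNReal.ofReal (sSup ((fun ζ => |g ζ - g A|) '' Set.Icc (A - u) A)) ∂ν < ⊤)
    (hhm : Measurable h)
    (hhb : ∀ K : Set ℝ, IsCompact K → ∃ M : ℝ, ∀ y ∈ K, |h y| ≤ M)
    (hhint : IntegrableOn (fun y => Real.exp (-Φ * y) * h (y + A)) (Set.Ioi 0)) :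
    Filter.Tendsto (fun x => deriv (Ufun q Φ ν W g h A) x) (nhdsWithin A (Set.Ioi A))
        (nhds (W'0 * PsiFun q Φ ν g h A))
    ∧ ∀ σ : ℝ, 0 < σ → W'0 = 2 / σ ^ 2 →
        (Filter.Tendsto (fun x => deriv (Ufun q Φ ν W g h A) x)
            (nhdsWithin A (Set.Ioi A)) (nhds (deriv g A)) ↔
          PsiFun q Φ ν g h A = σ ^ 2 / 2 * deriv g A) :=
  smooth_fit_general ν q Φ A W'0 g W h hν hgm hgb hW0 hWzero hWc hWd hWd' hW'0 hC1 hC2 hhm hhb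
end
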